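/- If (S,δ) is an irreducible Hopf C*-algebra, then its comultiplication δ is injective. -/

import Mathlib

/-!
The kernel `J` of `δ` is a closed two-sided ideal of `S`. Since `f · g = (f ⊗ g) ∘ δ` vanishes
on `J` for all `f, g`, the annihilator `J⊥ ⊆ S*` is a closed `S`-invariant ideal of the
convolution algebra, and by Hahn–Banach it is nonzero unless `J = S`. So if `J ≠ S`,
irreducibility makes `J⊥` separate the points of `S`, forcing `J = 0`. If `J = S`, i.e. `δ = 0`,
nondegeneracy of `δ` kills every elementary tensor `a ⊗ b`, hence `S = 0`.
-/

noncomputable section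

open scoped ComplexOrder InnerProductSpace

/-- The continuous dual of a complex normed space. -/
abbrev CDual (A : Type) [SeminormedAddCommGroup A] [NormedSpace ℂ A] := StrongDual ℂ A

/-- An abstract model of the multiplier algebra `MA` of a (non-unital) C*-algebra `A`:
`A` embeds isometrically into the unital C*-algebra `MA` as an essential two-sided ideal. -/
structure MultiplierSetting (A MA : Type) [NonUnitalCStarAlgebra A] [CStarAlgebra MA] :
    Type where
  ι : A →⋆ₙₐ[ℂ] MA
  isometry : ∀ a, ‖ι a‖ = ‖a‖
  mul_mem_left : ∀ (m : MA) (a : A), ∃ b, ι b = m * ι a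
  mul_mem_right : ∀ (m : MA) (a : A), ∃ b, ι b = ι a * m
  essential : ∀ m : MA, (∀ a, m * ι a = 0) → m = 0

namespace MultiplierSetting

variable {A MA : Type} [NonUnitalCStarAlgebra A] [CStarAlgebra MA]

/-- The embedding `A → MA` as a continuous linear map. -/
def ιL (m : MultiplierSetting A MA) : A →L[ℂ] MA :=
  LinearMap.mkContinuous (m.ι : A →ₗ[ℂ] MA) 1
    (fun a => by rw [one_mul]; exact le_of_eq (m.isometry a))

@[simp] lemma ιL_apply (m : MultiplierSetting A MA) (a : A) : m.ιL a = m.ι a := rfl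

end MultiplierSetting

/-- An abstract model of the multiplier algebra `M = M(A ⊗ B)` of a C*-tensor product of two
C*-algebras `A` and `B`, given models `MA`, `MB` of their multiplier algebras.  It records the
two leg embeddings `m ↦ m ⊗ 1`, `n ↦ 1 ⊗ n` (at the level of multipliers), the (strict
extensions of the) product functionals `f ⊗ g`, and the two slice maps `(f ⊗ id)`, `(id ⊗ g)`. -/
structure TensorMultiplierSettingBase (A B MA MB M : Type)
    [NonUnitalCStarAlgebra A] [NonUnitalCStarAlgebra B]
    [CStarAlgebra MA] [CStarAlgebra MB] [CStarAlgebra M]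
    (mA : MultiplierSetting A MA) (mB : MultiplierSetting B MB) : Type where
  emb₁ : MA →⋆ₐ[ℂ] M
  emb₂ : MB →⋆ₐ[ℂ] M
  emb_commute : ∀ m n, emb₁ m * emb₂ n = emb₂ n * emb₁ m
  pair : CDual A → CDual B → (M →L[ℂ] ℂ)
  pair_apply : ∀ f g a b, pair f g (emb₁ (mA.ι a) * emb₂ (mB.ι b)) = f a * g b
  sliceL : CDual A → (M →L[ℂ] MB)
  sliceL_apply : ∀ f a b, sliceL f (emb₁ (mA.ι a) * emb₂ (mB.ι b)) = f a • mB.ι b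
  sliceR : CDual B → (M →L[ℂ] MA)
  sliceR_apply : ∀ g a b, sliceR g (emb₁ (mA.ι a) * emb₂ (mB.ι b)) = g b • mA.ι a

/-- A model of the multiplier algebra of the *minimal* C*-tensor product: the product
functionals separate the points. -/
structure TensorMultiplierSetting (A B MA MB M : Type)
    [NonUnitalCStarAlgebra A] [NonUnitalCStarAlgebra B]
    [CStarAlgebra MA] [CStarAlgebra MB] [CStarAlgebra M]
    (mA : MultiplierSetting A MA) (mB : MultiplierSetting B MB)
    extends TensorMultiplierSettingBase A B MA MB M mA mB : Type where
  pair_separates : ∀ m, (∀ f g, pair f g m = 0) → m = 0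

namespace TensorMultiplierSettingBase

variable {A B MA MB M : Type}
    [NonUnitalCStarAlgebra A] [NonUnitalCStarAlgebra B]
    [CStarAlgebra MA] [CStarAlgebra MB] [CStarAlgebra M]
    {mA : MultiplierSetting A MA} {mB : MultiplierSetting B MB}
    (t : TensorMultiplierSettingBase A B MA MB M mA mB)

/-- The elementary tensor `a ⊗ b` inside the model of `M(A ⊗ B)`. -/
def τ (a : A) (b : B) : M := t.emb₁ (mA.ι a) * t.emb₂ (mB.ι b)

/-- The copy of the C*-tensor product `A ⊗ B` inside `M(A ⊗ B)`:
the closed linear span of the elementary tensors. -/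
def tensorSet : Set M :=
  closure (Submodule.span ℂ (Set.range fun p : A × B => t.τ p.1 p.2) : Set M)

/-- Membership in the copy of `A ⊗ B` inside `M(A ⊗ B)`. -/
def InTensor (x : M) : Prop := x ∈ t.tensorSet

end TensorMultiplierSettingBase

/-- An abstract model of a C*-algebra `S` endowed with a comultiplication
`δ : S → M(S ⊗ S)`, i.e. a non-degenerate *-homomorphism into (the model `MSS` of) the
multiplier algebra of the minimal tensor product `S ⊗ S`. -/
structure PreHopfSetting (S MS MSS : Type) [NonUnitalCStarAlgebra S]
    [CStarAlgebra MS] [CStarAlgebra MSS] (mS : MultiplierSetting S MS) : Type where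
  t : TensorMultiplierSetting S S MS MS MSS mS mS
  δ : S →⋆ₙₐ[ℂ] MSS
  δ_cont : Continuous δ
  nondeg : ∀ a b : S, t.τ a b ∈
    closure (Submodule.span ℂ {y : MSS | ∃ s x, t.InTensor x ∧ y = δ s * x} : Set MSS)

namespace PreHopfSetting

variable {S MS MSS : Type} [NonUnitalCStarAlgebra S] [CStarAlgebra MS] [CStarAlgebra MSS]
  {mS : MultiplierSetting S MS} (h : PreHopfSetting S MS MSS mS)

/-- The comultiplication as a continuous linear map. -/
def δL : S →L[ℂ] MSS := ⟨(h.δ : S →ₗ[ℂ] MSS), h.δ_cont⟩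

@[simp] lemma δL_apply (x : S) : h.δL x = h.δ x := rfl

/-- The convolution product `f · g = (f ⊗ g) ∘ δ` on the dual `S*`. -/
def conv (f g : CDual S) : CDual S := (h.t.pair f g).comp h.δL

/-- Coassociativity of the comultiplication, expressed through the convolution algebra `S*`. -/
def Coassoc : Prop := ∀ f g k : CDual S, h.conv (h.conv f g) k = h.conv f (h.conv g k)

/-- The Hopf C*-algebra conditions `δ(S)(1 ⊗ S) ⊆ S ⊗ S` and `δ(S)(S ⊗ 1) ⊆ S ⊗ S`. -/
def IsHopf : Prop :=
  (∀ s b : S, h.t.InTensor (h.δ s * h.t.emb₂ (mS.ι b))) ∧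
  (∀ s a : S, h.t.InTensor (h.δ s * h.t.emb₁ (mS.ι a)))

end PreHopfSetting

/-- An abstract model of a Hopf C*-algebra. -/
structure HopfSetting (S MS MSS : Type) [NonUnitalCStarAlgebra S]
    [CStarAlgebra MS] [CStarAlgebra MSS] (mS : MultiplierSetting S MS)
    extends PreHopfSetting S MS MSS mS : Type where
  coassoc : toPreHopfSetting.Coassoc
  hopf : toPreHopfSetting.IsHopf

section DualActions

variable {S : Type} [NonUnitalCStarAlgebra S]

/-- The left action `(a · f)(x) = f (x * a)` of `S` on its dual. -/
def dualActL (a : S) (f : CDual S) : CDual S := f.comp ((ContinuousLinearMap.mul ℂ S).flip a)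

/-- The right action `(f · a)(x) = f (a * x)` of `S` on its dual. -/
def dualActR (f : CDual S) (a : S) : CDual S := f.comp (ContinuousLinearMap.mul ℂ S a)

/-- A set of functionals `N ⊆ S*` is `S`-invariant if it is stable under both actions of `S`. -/
def IsInvariantSubset (N : Set (CDual S)) : Prop :=
  ∀ (a : S), ∀ f ∈ N, dualActL a f ∈ N ∧ dualActR f a ∈ N

end DualActions

namespace HopfSetting

variable {S MS MSS : Type} [NonUnitalCStarAlgebra S] [CStarAlgebra MS] [CStarAlgebra MSS]
  {mS : MultiplierSetting S MS} (h : HopfSetting S MS MSS mS)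

/-- A Hopf ideal: a non-trivial `S`-invariant closed two-sided ideal of the convolution
algebra `S*`. -/
def IsHopfIdeal (N : Submodule ℂ (CDual S)) : Prop :=
  N ≠ ⊥ ∧ IsClosed (N : Set (CDual S)) ∧ IsInvariantSubset (N : Set (CDual S)) ∧
    ∀ f g : CDual S, f ∈ N → h.conv f g ∈ N ∧ h.conv g f ∈ N

/-- A left Hopf ideal: a non-trivial `S`-invariant closed left ideal of `S*`. -/
def IsLeftHopfIdeal (N : Submodule ℂ (CDual S)) : Prop :=
  N ≠ ⊥ ∧ IsClosed (N : Set (CDual S)) ∧ IsInvariantSubset (N : Set (CDual S)) ∧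
    ∀ f g : CDual S, f ∈ N → h.conv g f ∈ N

/-- A right Hopf ideal: a non-trivial `S`-invariant closed right ideal of `S*`. -/
def IsRightHopfIdeal (N : Submodule ℂ (CDual S)) : Prop :=
  N ≠ ⊥ ∧ IsClosed (N : Set (CDual S)) ∧ IsInvariantSubset (N : Set (CDual S)) ∧
    ∀ f g : CDual S, f ∈ N → h.conv f g ∈ N

/-- The Fourier algebra of `S`: the intersection of all Hopf ideals of `S*`. -/
def fourierAlgebra : Submodule ℂ (CDual S) :=
  ⨅ (N : Submodule ℂ (CDual S)) (_ : h.IsHopfIdeal N), N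

/-- `S` is irreducible if every Hopf ideal of `S*` separates the points of `S`. -/
def Irreducible : Prop :=
  ∀ N : Submodule ℂ (CDual S), h.IsHopfIdeal N → ∀ x : S, (∀ f ∈ N, f x = 0) → x = 0

end HopfSetting

/-- The data of a Fourier duality `(T, X, S)`: a unitary `X ∈ M(T ⊗ S)` which is a
corepresentation in each leg (the corepresentation identities `(id ⊗ δ_S)(X) = X₁₂X₁₃` and
`(δ_T ⊗ id)(X) = X₁₃X₂₃` are expressed through the slice maps, by pairing with arbitrary
functionals on the remaining legs), together with the two density conditions of
Definition 3.1. -/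
structure FourierDualityData
    (T S MT MS MTT MSS MTS : Type)
    [NonUnitalCStarAlgebra T] [NonUnitalCStarAlgebra S]
    [CStarAlgebra MT] [CStarAlgebra MS] [CStarAlgebra MTT] [CStarAlgebra MSS] [CStarAlgebra MTS]
    (mT : MultiplierSetting T MT) (mS : MultiplierSetting S MS)
    (hT : PreHopfSetting T MT MTT mT) (hS : PreHopfSetting S MS MSS mS)
    (t : TensorMultiplierSetting T S MT MS MTS mT mS) : Type where
  X : MTS
  unitary : star X * X = 1 ∧ X * star X = 1
  corepS : ∀ g k : CDual S, t.sliceR (hS.conv g k) X = t.sliceR g X * t.sliceR k X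
  corepT : ∀ f f' : CDual T, t.sliceL (hT.conv f f') X = t.sliceL f X * t.sliceL f' X
  denseT : Dense {x : T | ∃ g : CDual S, mT.ι x = t.sliceR g X}
  denseS : Dense {y : S | ∃ f : CDual T, mS.ι y = t.sliceL f X}

namespace FourierDualityData

variable {T S MT MS MTT MSS MTS : Type}
    [NonUnitalCStarAlgebra T] [NonUnitalCStarAlgebra S]
    [CStarAlgebra MT] [CStarAlgebra MS] [CStarAlgebra MTT] [CStarAlgebra MSS] [CStarAlgebra MTS]
    {mT : MultiplierSetting T MT} {mS : MultiplierSetting S MS}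
    {hT : PreHopfSetting T MT MTT mT} {hS : PreHopfSetting S MS MSS mS}
    {t : TensorMultiplierSetting T S MT MS MTS mT mS}
    (F : FourierDualityData T S MT MS MTT MSS MTS mT mS hT hS t)

/-- `S# = {f ∈ S* : (id ⊗ f)(X) ∈ T}`. -/
def sharpS : Set (CDual S) := {g : CDual S | ∃ x : T, mT.ι x = t.sliceR g F.X}

/-- `T# = {g ∈ T* : (g ⊗ id)(X) ∈ S}`. -/
def sharpT : Set (CDual T) := {f : CDual T | ∃ y : S, mS.ι y = t.sliceL f F.X}

end FourierDualityData

namespace Submodule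

variable {𝕜 E : Type*} [RCLike 𝕜] [NormedAddCommGroup E] [NormedSpace 𝕜 E]

def strongDualAnnihilator (J : Submodule 𝕜 E) : Submodule 𝕜 (StrongDual 𝕜 E) :=
  J.dualAnnihilator.comap (ContinuousLinearMap.coeLM 𝕜)

theorem mem_strongDualAnnihilator {J : Submodule 𝕜 E} {f : StrongDual 𝕜 E} :
    f ∈ J.strongDualAnnihilator ↔ ∀ y ∈ J, f y = 0 :=
  mem_dualAnnihilator _

theorem isClosed_strongDualAnnihilator (J : Submodule 𝕜 E) :
    IsClosed (J.strongDualAnnihilator : Set (StrongDual 𝕜 E)) := by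
  have hset : (J.strongDualAnnihilator : Set (StrongDual 𝕜 E)) =
      ⋂ y ∈ J, {f : StrongDual 𝕜 E | f y = 0} := by
    ext f
    simp [mem_strongDualAnnihilator]
  rw [hset]
  exact isClosed_biInter fun y _ =>
    isClosed_eq (ContinuousLinearMap.apply 𝕜 𝕜 y).continuous continuous_const

theorem strongDualAnnihilator_ne_bot {J : Submodule 𝕜 E} (hJ : IsClosed (J : Set E))
    (hJ_top : J ≠ ⊤) : J.strongDualAnnihilator ≠ ⊥ := by
  obtain ⟨z, hz⟩ : ∃ z, z ∉ J := by simpa [eq_top_iff'] using hJ_top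
  have hz' : J.mkQL z ≠ 0 := by simpa [Quotient.mk_eq_zero] using hz
  -- Hahn–Banach in the normed quotient `E ⧸ J`
  obtain ⟨g, hg⟩ := SeparatingDual.exists_ne_zero (R := 𝕜) hz'
  refine J.strongDualAnnihilator.ne_bot_iff.2
    ⟨g.comp J.mkQL, mem_strongDualAnnihilator.2 fun y hy => ?_, ?_⟩
  · simp [(Quotient.mk_eq_zero J).2 hy]
  · exact fun hzero => hg (by simpa using congrArg (fun f : StrongDual 𝕜 E => f z) hzero)

end Submodule

theorem isInvariantSubset_strongDualAnnihilator {S : Type} [NonUnitalCStarAlgebra S]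
    {J : Submodule ℂ S} (hJ : ∀ y ∈ J, ∀ a : S, y * a ∈ J ∧ a * y ∈ J) :
    IsInvariantSubset (J.strongDualAnnihilator : Set (CDual S)) := by
  intro a f hf
  rw [SetLike.mem_coe, Submodule.mem_strongDualAnnihilator] at hf
  refine ⟨Submodule.mem_strongDualAnnihilator.2 fun y hy => ?_,
    Submodule.mem_strongDualAnnihilator.2 fun y hy => ?_⟩
  · simpa [dualActL] using hf _ (hJ y hy a).1
  · simpa [dualActR] using hf _ (hJ y hy a).2

namespace PreHopfSetting

variable {S MS MSS : Type} [NonUnitalCStarAlgebra S] [CStarAlgebra MS] [CStarAlgebra MSS]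
  {mS : MultiplierSetting S MS} (h : PreHopfSetting S MS MSS mS)

theorem conv_apply_eq_zero_of_δ_eq_zero (f g : CDual S) {y : S} (hy : h.δ y = 0) :
    h.conv f g y = 0 := by
  simp [conv, hy]

theorem mul_mem_ker_δL {y : S} (hy : y ∈ h.δL.ker) (a : S) :
    y * a ∈ h.δL.ker ∧ a * y ∈ h.δL.ker := by
  simp_all [LinearMap.mem_ker, map_mul]

theorem τ_eq_zero_of_δ_eq_zero (hδ : ∀ s, h.δ s = 0) (a b : S) : h.t.τ a b = 0 := by
  have hspan : Submodule.span ℂ {y : MSS | ∃ s x, h.t.InTensor x ∧ y = h.δ s * x} = ⊥ := by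
    rw [Submodule.span_eq_bot]
    rintro y ⟨s, x, -, rfl⟩
    simp [hδ s]
  simpa [hspan] using h.nondeg a b

theorem subsingleton_of_δ_eq_zero (hδ : ∀ s, h.δ s = 0) : Subsingleton S := by
  suffices hzero : ∀ x : S, x = 0 from ⟨fun x y => (hzero x).trans (hzero y).symm⟩
  intro x
  refine SeparatingDual.eq_zero_of_forall_dual_eq_zero (R := ℂ) fun f => ?_
  have hpair := h.t.pair_apply f f x x
  rw [show h.t.emb₁ (mS.ι x) * h.t.emb₂ (mS.ι x) = h.t.τ x x from rfl,
    h.τ_eq_zero_of_δ_eq_zero hδ, map_zero] at hpair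
  exact mul_self_eq_zero.1 hpair.symm

end PreHopfSetting

namespace HopfSetting

variable {S MS MSS : Type} [NonUnitalCStarAlgebra S] [CStarAlgebra MS] [CStarAlgebra MSS]
  {mS : MultiplierSetting S MS} (h : HopfSetting S MS MSS mS)

theorem isHopfIdeal_strongDualAnnihilator_ker (hker : h.δL.ker ≠ ⊤) :
    h.IsHopfIdeal (h.δL.ker).strongDualAnnihilator := by
  refine ⟨Submodule.strongDualAnnihilator_ne_bot h.δL.isClosed_ker hker,
    Submodule.isClosed_strongDualAnnihilator _,
    isInvariantSubset_strongDualAnnihilator fun y hy a => h.mul_mem_ker_δL hy a,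
    fun f g _ => ⟨?_, ?_⟩⟩ <;>
  exact Submodule.mem_strongDualAnnihilator.2 fun y hy =>
    h.conv_apply_eq_zero_of_δ_eq_zero _ _ (LinearMap.mem_ker.1 hy)

end HopfSetting

/-- Lemma 5.2. If `(S, δ)` is an irreducible Hopf C*-algebra, then its
comultiplication `δ` is injective. -/
theorem comul_injective_of_irreducible
    (S MS MSS : Type) [NonUnitalCStarAlgebra S] [CStarAlgebra MS] [CStarAlgebra MSS]
    (mS : MultiplierSetting S MS) (h : HopfSetting S MS MSS mS)
    (hirr : h.Irreducible) :
    Function.Injective h.δ := by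
  refine (injective_iff_map_eq_zero h.δ).2 fun x hx => ?_
  by_cases hker : h.δL.ker = ⊤
  · have : Subsingleton S := h.subsingleton_of_δ_eq_zero fun s =>
      LinearMap.mem_ker.1 (hker ▸ Submodule.mem_top : s ∈ h.δL.ker)
    exact Subsingleton.elim x 0
  · exact hirr _ (h.isHopfIdeal_strongDualAnnihilator_ker hker) x fun f hf =>
      Submodule.mem_strongDualAnnihilator.1 hf x hx
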